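/- arXiv:1704.02393 — 4 statements merged into one kernel-verified Lean document; each statement's English description precedes it below -/
import Mathlib

section
/- With F defined as the sum over categories c of the sum of the h_c largest weights W(v,c) over v ∈ S, F is submodular: for all A ⊆ B ⊆ I and e ∈ I \ B, F(A ∪ {e}) − F(A) ≥ F(B ∪ {e}) − F(B). -/
open Finset

/-- Sum of the `k` largest elements of a finite multiset of reals
(all elements if fewer than `k`). -/
noncomputable def topSum (k : ℕ) (M : Multiset ℝ) : ℝ :=
  ((M.sort (· ≥ ·)).take k).sum

/-- Single-category top-`h` sum of weights `w` over a finite set `S`. -/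
noncomputable def topSet {I : Type*} (w : I → ℝ) (h : ℕ) (S : Finset I) : ℝ :=
  topSum h (S.val.map w)

/-- The `h`-th largest value of `w` on `S` (meaningful when `h ≤ S.card`). -/
noncomputable def kthLargest {I : Type*} (w : I → ℝ) (h : ℕ) (S : Finset I) : ℝ :=
  ((S.val.map w).sort (· ≥ ·)).getD (h - 1) 0

/-! Adding `e ∉ S` raises the top-`k` sum by `max 0 (w e - t)`, where `t` is the `k`-th largest
weight on `S`, taken to be `0` when `S` has fewer than `k` elements; this is where the
nonnegativity of the weights enters. Enlarging `S` can only raise `t`, so the marginal gain of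
`e` shrinks, and summing over categories preserves this. -/

namespace List

variable {α : Type*} {L : List α} {x : α}

theorem getD_le_of_forall_le [Preorder α] {b d : α} (hL : ∀ y ∈ L, y ≤ b) (hd : d ≤ b)
    (i : ℕ) : L.getD i d ≤ b := by
  rcases lt_or_ge i L.length with hi | hi
  · rw [getD_eq_getElem _ _ hi]
    exact hL _ (getElem_mem hi)
  · rw [getD_eq_default _ _ hi]
    exact hd

theorem getD_succ_le_getD [Preorder α] [Zero α] (hL : L.Pairwise (· ≥ ·))
    (hL0 : ∀ y ∈ L, 0 ≤ y) (i : ℕ) : L.getD (i + 1) 0 ≤ L.getD i 0 := by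
  induction L generalizing i with
  | nil => simp
  | cons a L ih =>
    obtain ⟨haL, hL⟩ := pairwise_cons.1 hL
    cases i with
    | zero => exact getD_le_of_forall_le haL (hL0 a mem_cons_self) 0
    | succ i => exact ih hL (fun y hy => hL0 y (mem_cons_of_mem a hy)) i

theorem getD_le_getD_orderedInsert [LinearOrder α] [Zero α] (hL : L.Pairwise (· ≥ ·))
    (hL0 : ∀ y ∈ L, 0 ≤ y) (hx : 0 ≤ x) (i : ℕ) :
    L.getD i 0 ≤ (L.orderedInsert (· ≥ ·) x).getD i 0 := by
  induction L generalizing i with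
  | nil => cases i <;> simp [hx]
  | cons a L ih =>
    by_cases hax : x ≥ a
    · rw [orderedInsert_cons_of_le (r := (· ≥ ·)) L hax]
      cases i with
      | zero => exact hax
      | succ i => exact getD_succ_le_getD hL hL0 i
    · rw [orderedInsert_of_not_le (r := (· ≥ ·)) L hax]
      cases i with
      | zero => rfl
      | succ i => exact ih (pairwise_cons.1 hL).2 (fun y hy => hL0 y (mem_cons_of_mem a hy)) i

theorem sum_take_succ_eq_add_getD [AddMonoid α] (L : List α) (i : ℕ) :
    (L.take (i + 1)).sum = (L.take i).sum + L.getD i 0 := by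
  rw [take_add_one, sum_append, getD_eq_getElem?_getD]
  cases L[i]? <;> simp

theorem sum_take_succ_orderedInsert [AddCommGroup α] [LinearOrder α] [IsOrderedAddMonoid α]
    (hL : L.Pairwise (· ≥ ·)) (hL0 : ∀ y ∈ L, 0 ≤ y) (hx : 0 ≤ x) (k : ℕ) :
    ((L.orderedInsert (· ≥ ·) x).take (k + 1)).sum =
      (L.take (k + 1)).sum + max 0 (x - L.getD k 0) := by
  induction L generalizing k with
  | nil => simp [hx]
  | cons a L ih =>
    obtain ⟨haL, hL⟩ := pairwise_cons.1 hL
    by_cases hax : x ≥ a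
    · have hkx : (a :: L).getD k 0 ≤ x :=
        getD_le_of_forall_le (forall_mem_cons.2 ⟨hax, fun y hy => (haL y hy).trans hax⟩) hx k
      rw [orderedInsert_cons_of_le (r := (· ≥ ·)) L hax, take_succ_cons, sum_cons,
        sum_take_succ_eq_add_getD, max_eq_right (sub_nonneg.2 hkx)]
      abel
    · rw [orderedInsert_of_not_le (r := (· ≥ ·)) L hax, take_succ_cons, sum_cons,
        take_succ_cons, sum_cons]
      cases k with
      | zero => simp [(not_le.1 hax).le]
      | succ k =>
        rw [ih hL (fun y hy => hL0 y (mem_cons_of_mem a hy)), getD_cons_succ, add_assoc]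

end List

namespace Multiset

theorem sort_cons_eq_orderedInsert {α : Type*} (r : α → α → Prop) [DecidableRel r]
    [IsTrans α r] [Std.Antisymm r] [Std.Total r] (a : α) (s : Multiset α) :
    (a ::ₘ s).sort r = (s.sort r).orderedInsert r a :=
  Quot.inductionOn s fun l => by simp [List.mergeSort_eq_insertionSort]

theorem getD_sort_le_of_le {α : Type*} [LinearOrder α] [Zero α] {M N : Multiset α}
    (hMN : M ≤ N) (hN : ∀ y ∈ N, 0 ≤ y) (i : ℕ) :
    (M.sort (· ≥ ·)).getD i 0 ≤ (N.sort (· ≥ ·)).getD i 0 := by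
  obtain ⟨K, rfl⟩ := le_iff_exists_add.1 hMN
  induction K using Multiset.induction with
  | empty => simp
  | cons x K ih =>
    rw [add_cons] at hN ⊢
    have hMK : ∀ y ∈ M + K, 0 ≤ y := fun y hy => hN y (mem_cons_of_mem hy)
    calc (M.sort (· ≥ ·)).getD i 0 ≤ ((M + K).sort (· ≥ ·)).getD i 0 :=
          ih (le_add_right M K) hMK
      _ ≤ ((x ::ₘ (M + K)).sort (· ≥ ·)).getD i 0 := by
          rw [sort_cons_eq_orderedInsert]
          exact List.getD_le_getD_orderedInsert (pairwise_sort _ _)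
            (fun y hy => hMK y ((mem_sort _).1 hy)) (hN x (mem_cons_self x _)) i

end Multiset

theorem topSum_cons {M : Multiset ℝ} (hM : ∀ y ∈ M, 0 ≤ y) {x : ℝ} (hx : 0 ≤ x)
    (k : ℕ) :
    topSum (k + 1) (x ::ₘ M) = topSum (k + 1) M + max 0 (x - (M.sort (· ≥ ·)).getD k 0) := by
  rw [topSum, topSum, Multiset.sort_cons_eq_orderedInsert]
  exact List.sum_take_succ_orderedInsert (Multiset.pairwise_sort _ _)
    (fun y hy => hM y ((Multiset.mem_sort _).1 hy)) hx k

section topSet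

variable {I : Type*} {w : I → ℝ}

theorem topSet_insert [DecidableEq I] (hw : ∀ v, 0 ≤ w v) (k : ℕ) {S : Finset I} {e : I}
    (he : e ∉ S) :
    topSet w (k + 1) (insert e S) = topSet w (k + 1) S + max 0 (w e - kthLargest w (k + 1) S) := by
  rw [topSet, insert_val_of_notMem he, Multiset.map_cons, topSum_cons (fun y hy => ?_) (hw e)]
  · rfl
  · obtain ⟨v, -, rfl⟩ := Multiset.mem_map.1 hy
    exact hw v

theorem kthLargest_mono (hw : ∀ v, 0 ≤ w v) (k : ℕ) {S T : Finset I} (hST : S ⊆ T) :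
    kthLargest w k S ≤ kthLargest w k T :=
  Multiset.getD_sort_le_of_le (Multiset.map_le_map (val_le_iff.2 hST))
    (fun y hy => by obtain ⟨v, -, rfl⟩ := Multiset.mem_map.1 hy; exact hw v) (k - 1)

theorem topSet_insert_sub_le_of_subset [DecidableEq I] (hw : ∀ v, 0 ≤ w v) (k : ℕ)
    {A B : Finset I} (hAB : A ⊆ B) {e : I} (he : e ∉ B) :
    topSet w k (insert e B) - topSet w k B ≤ topSet w k (insert e A) - topSet w k A := by
  cases k with
  | zero => simp [topSet, topSum]
  | succ k =>
    rw [topSet_insert hw k he, topSet_insert hw k (fun heA => he (hAB heA)),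
      add_sub_cancel_left, add_sub_cancel_left]
    exact max_le_max le_rfl (sub_le_sub_left (kthLargest_mono hw _ hAB) _)

end topSet

theorem top_h_objective_submodular_general {I C : Type*} [Fintype C] [DecidableEq I]
    (W : I → C → ℝ) (hW : ∀ v c, 0 ≤ W v c)
    (h : C → ℕ)
    (A B : Finset I) (hAB : A ⊆ B) (e : I) (he : e ∉ B) :
    (∑ c : C, topSet (fun v => W v c) (h c) (insert e A)) -
        (∑ c : C, topSet (fun v => W v c) (h c) A) ≥
      (∑ c : C, topSet (fun v => W v c) (h c) (insert e B)) -
        (∑ c : C, topSet (fun v => W v c) (h c) B) := by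
  rw [ge_iff_le, ← sum_sub_distrib, ← sum_sub_distrib]
  exact sum_le_sum fun c _ => topSet_insert_sub_le_of_subset (fun v => hW v c) (h c) hAB he

theorem top_h_objective_submodular {I C : Type*} [Fintype I] [Fintype C] [DecidableEq I]
    (W : I → C → ℝ) (hW : ∀ v c, 0 ≤ W v c)
    (h : C → ℕ) (hh : ∀ c, 1 ≤ h c)
    (A B : Finset I) (hAB : A ⊆ B) (e : I) (he : e ∉ B) :
    (∑ c : C, topSet (fun v => W v c) (h c) (insert e A)) -
        (∑ c : C, topSet (fun v => W v c) (h c) A) ≥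
      (∑ c : C, topSet (fun v => W v c) (h c) (insert e B)) -
        (∑ c : C, topSet (fun v => W v c) (h c) B) :=
  top_h_objective_submodular_general W hW h A B hAB e he
end

section
/- For g(S) = sum of the min(h,|S|) largest values of w on S, the marginal gain of adding e ∉ S to a set S with |S| ≥ h equals max(w(e) − τ_h(S), 0), where τ_h(S) is the h-th largest value of w on S. -/
open Finset

/-! The values of `w` on `insert e S`, sorted decreasingly, are those on `S` with `w e` put in
its place. Inserting into a decreasing list leaves its first `h` entries alone when the new
value is at most the `h`-th entry; otherwise the new value enters the top `h` and the old
`h`-th entry drops out. -/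

theorem Multiset.sort_cons_eq_orderedInsert_s4 {α : Type*} (r : α → α → Prop) [DecidableRel r]
    [IsTrans α r] [Std.Antisymm r] [Std.Total r] (a : α) (s : Multiset α) :
    (a ::ₘ s).sort r = (s.sort r).orderedInsert r a := by
  refine List.Perm.eq_of_pairwise' (Multiset.pairwise_sort _ _)
    ((Multiset.pairwise_sort s r).orderedInsert a _) ?_
  refine (Multiset.coe_eq_coe.mp ?_).trans (List.perm_orderedInsert r a _).symm
  rw [← Multiset.cons_coe, Multiset.sort_eq, Multiset.sort_eq]

theorem List.sum_take_succ_orderedInsert_s4 {α : Type*} [AddCommGroup α] [LinearOrder α]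
    [IsOrderedAddMonoid α] (a : α) :
    ∀ {L : List α} {m : ℕ}, L.Pairwise (· ≥ ·) → (hm : m < L.length) →
      ((L.orderedInsert (· ≥ ·) a).take (m + 1)).sum = (L.take (m + 1)).sum + max (a - L[m]) 0
  | b :: t, 0, _, _ => by
    by_cases hab : a ≥ b
    · simp [hab]
    · simp [hab, le_of_lt (not_le.mp hab)]
  | b :: t, m + 1, hL, hm => by
    have hm' : m < t.length := Nat.lt_of_succ_lt_succ hm
    by_cases hab : a ≥ b
    · have hbt : t[m] ≤ b := List.rel_of_pairwise_cons hL (List.getElem_mem hm')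
      simp only [List.orderedInsert_cons, hab, if_true, List.take_succ_cons, List.sum_cons,
        List.getElem_cons_succ, List.sum_take_succ t m hm',
        max_eq_left (sub_nonneg.mpr (hbt.trans hab))]
      abel
    · simp only [List.orderedInsert_cons, hab, if_false, List.take_succ_cons, List.sum_cons,
        List.getElem_cons_succ, List.sum_take_succ_orderedInsert_s4 a hL.of_cons hm']
      abel

theorem top_h_marginal_gain_general {I : Type*} [DecidableEq I]
    (w : I → ℝ) (h : ℕ) (hh : 1 ≤ h)
    (S : Finset I) (hS : h ≤ S.card) (e : I) (he : e ∉ S) :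
    topSet w h (insert e S) - topSet w h S = max (w e - kthLargest w h S) 0 := by
  obtain ⟨m, rfl⟩ : ∃ m, h = m + 1 := ⟨h - 1, by omega⟩
  have hm : m < ((S.val.map w).sort (· ≥ ·)).length := by
    rw [Multiset.length_sort, Multiset.card_map]; exact hS
  rw [topSet, topSet, topSum, topSum, kthLargest, Finset.insert_val_of_notMem he,
    Multiset.map_cons, Multiset.sort_cons_eq_orderedInsert_s4,
    List.sum_take_succ_orderedInsert_s4 _ (Multiset.pairwise_sort _ _) hm, Nat.add_sub_cancel,
    List.getD_eq_getElem _ _ hm]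
  abel

theorem top_h_marginal_gain {I : Type*} [Fintype I] [DecidableEq I]
    (w : I → ℝ) (hw : ∀ v, 0 ≤ w v) (h : ℕ) (hh : 1 ≤ h)
    (S : Finset I) (hS : h ≤ S.card) (e : I) (he : e ∉ S) :
    topSet w h (insert e S) - topSet w h S = max (w e - kthLargest w h S) 0 :=
  top_h_marginal_gain_general w h hh S hS e he
end

section
/- The greedy algorithm for maximizing a nonnegative monotone submodular function f with f(∅) = 0 under a cardinality constraint k achieves f(S_greedy) ≥ (1 − (1 − 1/k)^k) · f(S*) ≥ (1 − 1/e) · f(S*), where S* is an optimal set of size at most k. -/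
open Finset

lemma submod_sum_bound {I : Type*} [DecidableEq I] (f : Finset I → ℝ)
    (hsub : ∀ A B : Finset I, A ⊆ B → ∀ e ∉ B,
      f (insert e A) - f A ≥ f (insert e B) - f B)
    (B : Finset I) :
    ∀ T : Finset I, (∀ e ∈ T, e ∉ B) →
      f (B ∪ T) - f B ≤ ∑ e ∈ T, (f (insert e B) - f B) := by
  intro T
  induction T using Finset.induction_on with
  | empty => simp
  | @insert a T ha ih =>
    intro hdisj
    have haB : a ∉ B := hdisj a (mem_insert_self a T)
    have haBT : a ∉ B ∪ T := by simp [haB, ha]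
    have h1 : f (insert a (B ∪ T)) - f (B ∪ T) ≤ f (insert a B) - f B :=
      hsub B (B ∪ T) subset_union_left a haBT
    have h2 : f (B ∪ T) - f B ≤ ∑ e ∈ T, (f (insert e B) - f B) :=
      ih (fun e he => hdisj e (mem_insert_of_mem he))
    have heq : B ∪ insert a T = insert a (B ∪ T) := by
      ext x; simp [or_comm, or_left_comm]
    rw [heq, Finset.sum_insert ha]
    linarith

theorem greedy_submodular_guarantee {I : Type*} [Fintype I] [DecidableEq I]
    (f : Finset I → ℝ)
    (hnn : ∀ S, 0 ≤ f S)
    (hmono : ∀ A B : Finset I, A ⊆ B → f A ≤ f B)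
    (hsub : ∀ A B : Finset I, A ⊆ B → ∀ e ∉ B,
      f (insert e A) - f A ≥ f (insert e B) - f B)
    (hempty : f ∅ = 0)
    (k : ℕ) (hk : 1 ≤ k)
    (S : ℕ → Finset I) (hS0 : S 0 = ∅)
    (hgreedy : ∀ i < k, ∃ e ∉ S i, S (i + 1) = insert e (S i) ∧
      ∀ e', f (insert e' (S i)) ≤ f (insert e (S i)))
    (Sstar : Finset I) (hopt : Sstar.card ≤ k) :
    f (S k) ≥ (1 - (1 - 1 / (k : ℝ)) ^ k) * f Sstar ∧
      (1 - (1 - 1 / (k : ℝ)) ^ k) * f Sstar ≥ (1 - 1 / Real.exp 1) * f Sstar := by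
  have hkr : (1 : ℝ) ≤ (k : ℝ) := by exact_mod_cast hk
  have hkpos : (0 : ℝ) < (k : ℝ) := lt_of_lt_of_le one_pos hkr
  have hq : (0 : ℝ) ≤ 1 - 1 / (k : ℝ) := by
    have : 1 / (k : ℝ) ≤ 1 := by
      rw [div_le_one hkpos]; exact hkr
    linarith
  -- per-step bound
  have step : ∀ i < k, f Sstar - f (S i) ≤ (k : ℝ) * (f (S (i+1)) - f (S i)) := by
    intro i hi
    obtain ⟨e, he, hSi1, hbest⟩ := hgreedy i hi
    have hδ : 0 ≤ f (S (i+1)) - f (S i) := by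
      have := hmono (S i) (S (i+1)) (by rw [hSi1]; exact subset_insert _ _)
      linarith
    set T : Finset I := Sstar \ S i with hT
    have hdisj : ∀ x ∈ T, x ∉ S i := fun x hx => (mem_sdiff.mp hx).2
    have hsum := submod_sum_bound f hsub (S i) T hdisj
    have hsum2 : ∑ x ∈ T, (f (insert x (S i)) - f (S i)) ≤
        (T.card : ℝ) * (f (S (i+1)) - f (S i)) := by
      rw [← nsmul_eq_mul, ← Finset.sum_const]
      apply Finset.sum_le_sum
      intro x hx
      have := hbest x
      rw [hSi1]; linarith
    have hcard : (T.card : ℝ) ≤ (k : ℝ) := by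
      have : T.card ≤ Sstar.card := card_le_card (sdiff_subset)
      exact_mod_cast le_trans this hopt
    have hmono2 : f Sstar ≤ f (S i ∪ T) := by
      apply hmono
      intro x hx
      by_cases h : x ∈ S i
      · exact mem_union_left _ h
      · exact mem_union_right _ (mem_sdiff.mpr ⟨hx, h⟩)
    nlinarith [mul_le_mul_of_nonneg_right hcard hδ]
  -- induction
  have main : ∀ i ≤ k, f Sstar - f (S i) ≤ (1 - 1 / (k : ℝ)) ^ i * f Sstar := by
    intro i
    induction i with
    | zero => intro _; simp [hS0, hempty]
    | succ i ih =>
      intro hik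
      have hi : i < k := hik
      have ihh := ih (le_of_lt hi)
      have hstep := step i hi
      have hdiv : (f Sstar - f (S i)) / (k : ℝ) ≤ f (S (i+1)) - f (S i) := by
        rw [div_le_iff₀ hkpos]; linarith [mul_comm (f (S (i+1)) - f (S i)) (k : ℝ)]
      have : f Sstar - f (S (i+1)) ≤ (1 - 1 / (k : ℝ)) * (f Sstar - f (S i)) := by
        have : (1 - 1 / (k : ℝ)) * (f Sstar - f (S i)) =
            (f Sstar - f (S i)) - (f Sstar - f (S i)) / (k : ℝ) := by
          field_simp
        rw [this]; linarith
      calc f Sstar - f (S (i+1)) ≤ (1 - 1 / (k : ℝ)) * (f Sstar - f (S i)) := this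
        _ ≤ (1 - 1 / (k : ℝ)) * ((1 - 1 / (k : ℝ)) ^ i * f Sstar) :=
            mul_le_mul_of_nonneg_left ihh hq
        _ = (1 - 1 / (k : ℝ)) ^ (i+1) * f Sstar := by ring
  have hmain := main k le_rfl
  constructor
  · linarith
  · have hexp : 1 - 1 / (k : ℝ) ≤ Real.exp (-(1 / (k : ℝ))) := by
      have := Real.add_one_le_exp (-(1 / (k : ℝ)))
      linarith
    have hpow : (1 - 1 / (k : ℝ)) ^ k ≤ Real.exp (-(1 / (k : ℝ))) ^ k :=
      pow_le_pow_left₀ hq hexp k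
    have hpe : Real.exp (-(1 / (k : ℝ))) ^ k = Real.exp (-1) := by
      rw [← Real.exp_nat_mul]
      congr 1
      field_simp
    have h1e : Real.exp (-1) = 1 / Real.exp 1 := by
      rw [Real.exp_neg]; rw [inv_eq_one_div]
    have : (1 - 1 / (k : ℝ)) ^ k ≤ 1 / Real.exp 1 := by
      rw [← h1e, ← hpe]; exact hpow
    have := mul_le_mul_of_nonneg_right (by linarith : (1 : ℝ) - 1 / Real.exp 1 ≤ 1 - (1 - 1 / (k : ℝ)) ^ k) (hnn Sstar)
    linarith
end

section
/- If at each greedy step i the chosen element maximizes the marginal gain, then for an optimal set S* with |S*| ≤ k and f nonnegative monotone submodular with f(∅)=0, the greedy iterates satisfy f(S*) − f(S_{i+1}) ≤ (1 − 1/k)(f(S*) − f(S_i)). -/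
open Finset

lemma marginal_sum {I : Type*} [DecidableEq I]
    (f : Finset I → ℝ)
    (hmono : ∀ A B : Finset I, A ⊆ B → f A ≤ f B)
    (hsub : ∀ A B : Finset I, A ⊆ B → ∀ e ∉ B,
      f (insert e A) - f A ≥ f (insert e B) - f B)
    (A : Finset I) (T : Finset I) :
    f (A ∪ T) - f A ≤ ∑ e ∈ T, (f (insert e A) - f A) := by
  induction T using Finset.induction_on with
  | empty => simp
  | @insert a T ha ih =>
    rw [Finset.sum_insert ha]
    have key : f (A ∪ insert a T) - f (A ∪ T) ≤ f (insert a A) - f A := by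
      by_cases haAT : a ∈ A ∪ T
      · have : A ∪ insert a T = A ∪ T := by
          rw [Finset.union_insert, Finset.insert_eq_self.mpr haAT]
        rw [this]
        have := hmono A (insert a A) (Finset.subset_insert _ _)
        linarith
      · have := hsub A (A ∪ T) Finset.subset_union_left a haAT
        rw [Finset.union_insert]
        linarith
    linarith

theorem greedy_step_contraction {I : Type*} [Fintype I] [DecidableEq I]
    (f : Finset I → ℝ)
    (hnn : ∀ S, 0 ≤ f S)
    (hmono : ∀ A B : Finset I, A ⊆ B → f A ≤ f B)
    (hsub : ∀ A B : Finset I, A ⊆ B → ∀ e ∉ B,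
      f (insert e A) - f A ≥ f (insert e B) - f B)
    (hempty : f ∅ = 0)
    (k : ℕ) (hk : 1 ≤ k)
    (S : ℕ → Finset I)
    (Sstar : Finset I) (hopt : Sstar.card ≤ k)
    (i : ℕ)
    (hstep : ∃ e ∉ S i, S (i + 1) = insert e (S i) ∧
      ∀ e' ∉ S i, f (insert e' (S i)) - f (S i) ≤ f (insert e (S i)) - f (S i)) :
    f Sstar - f (S (i + 1)) ≤ (1 - 1 / (k : ℝ)) * (f Sstar - f (S i)) := by
  obtain ⟨e, he, hS1, hmax⟩ := hstep
  set δ := f (insert e (S i)) - f (S i) with hδ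
  have hδ0 : 0 ≤ δ := by
    have := hmono (S i) (insert e (S i)) (Finset.subset_insert _ _)
    linarith
  have hD : f Sstar - f (S i) ≤ (k : ℝ) * δ := by
    have h1 : f Sstar ≤ f (S i ∪ (Sstar \ S i)) :=
      hmono _ _ (fun x hx => by
        by_cases h : x ∈ S i
        · exact Finset.mem_union_left _ h
        · exact Finset.mem_union_right _ (Finset.mem_sdiff.mpr ⟨hx, h⟩))
    have h2 := marginal_sum f hmono hsub (S i) (Sstar \ S i)
    have h3 : ∑ x ∈ Sstar \ S i, (f (insert x (S i)) - f (S i))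
        ≤ ∑ _x ∈ Sstar \ S i, δ := by
      apply Finset.sum_le_sum
      intro x hx
      exact hmax x (Finset.mem_sdiff.mp hx).2
    rw [Finset.sum_const, nsmul_eq_mul] at h3
    have hcard : ((Sstar \ S i).card : ℝ) ≤ (k : ℝ) := by
      exact_mod_cast le_trans (Finset.card_le_card (Finset.sdiff_subset)) hopt
    have h4 : ((Sstar \ S i).card : ℝ) * δ ≤ (k : ℝ) * δ :=
      mul_le_mul_of_nonneg_right hcard hδ0
    linarith
  have hkpos : (0 : ℝ) < (k : ℝ) := by exact_mod_cast hk
  have hdiv : (f Sstar - f (S i)) / (k : ℝ) ≤ δ := by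
    rw [div_le_iff₀ hkpos]
    linarith [hD, mul_comm δ (k : ℝ)]
  rw [hS1]
  have : (1 - 1 / (k : ℝ)) * (f Sstar - f (S i))
      = (f Sstar - f (S i)) - (f Sstar - f (S i)) / (k : ℝ) := by
    field_simp
  rw [this]
  linarith
end
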